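/- For the constant kernel K ≡ 1, the boundary operator ∂_ℓ⁰ g(x) = Σᵢ (-1)ⁱ ∫_X g(x₀,…,x_{i-1},t,xᵢ,…,x_{ℓ-1}) dμ(t) satisfies: for ℓ > 1, Im ∂_ℓ⁰ = Ker ∂_{ℓ-1}⁰, and Im ∂₁⁰ = {1}^⊥, the orthogonal complement of the constant functions in L²(X). -/

import Mathlib

/-!
Prepending a dummy coordinate, `h ↦ h ∘ Fin.tail`, is a contracting homotopy: the `0`-th face
integrates the dummy coordinate away against the probability measure `μ`, and the other faces
commute with `Fin.tail`, so `∂(h ∘ tail) = h - (∂h) ∘ tail`. Hence every cycle is a boundary, and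
in degree `1`, where `∂₀ h` is the constant `∫ h`, so is every `h ⊥ 1`. Conversely the faces
`g ↦ ∫ g(…, t, …) dμ(t)` satisfy the simplicial identities by Fubini, which gives `∂∂ = 0`, and
`∫ ∂₁ g = ∫ g - ∫ g = 0`.
-/

open MeasureTheory

/-- The boundary operator `∂_ℓ⁰` for the constant kernel `K ≡ 1`:
`∂_ℓ⁰ g(x₀,…,x_{ℓ-1}) = Σᵢ (-1)ⁱ ∫_X g(x₀,…,x_{i-1},t,xᵢ,…,x_{ℓ-1}) dμ(t)`.
Here `boundary0 μ n : L²(X^{n+1}) → L²(X^n)` plays the role of `∂_n⁰`. -/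
noncomputable def boundary0 {X : Type*} [MeasurableSpace X] (μ : Measure X)
    (n : ℕ) (g : (Fin (n + 1) → X) → ℝ) : (Fin n → X) → ℝ :=
  fun x => ∑ i : Fin (n + 1),
    (-1 : ℝ) ^ (i : ℕ) * ∫ t, g (i.insertNth t x) ∂μ

namespace Fin

lemma succ_succAbove_succAbove_of_le {n : ℕ} {i j : Fin (n + 1)} (hji : j ≤ i) (k : Fin n) :
    i.succ.succAbove (j.succAbove k) = j.castSucc.succAbove (i.succAbove k) := by
  ext
  simp only [succAbove, lt_def, le_def] at *
  split_ifs <;> simp_all [val_succ] <;> omega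

lemma insertNth_castSucc_insertNth_of_le {β : Type*} {n : ℕ} {i j : Fin (n + 1)} (hji : j ≤ i)
    (s t : β) (x : Fin n → β) :
    insertNth (α := fun _ => β) j.castSucc s (insertNth i t x)
      = insertNth i.succ t (insertNth j s x) := by
  refine insertNth_eq_iff.2 ⟨?_, insertNth_eq_iff.2 ⟨?_, funext fun k => ?_⟩⟩
  · rw [← succAbove_succ_of_le i j hji, insertNth_apply_succAbove, insertNth_apply_same]
  · simp [removeNth, succAbove_castSucc_of_le j i hji]
  · simp [removeNth, ← succ_succAbove_succAbove_of_le hji]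

lemma tail_insertNth_succ {β : Type*} {n : ℕ} (j : Fin (n + 1)) (t : β) (x : Fin (n + 1) → β) :
    tail (insertNth (α := fun _ => β) j.succ t x) = insertNth j t (tail x) := by
  conv_lhs => rw [← cons_self_tail x, insertNth_succ_cons]
  rfl

lemma sum_neg_one_pow_smul_sum_eq_zero {M : Type*} [AddCommGroup M] {n : ℕ}
    (F : Fin (n + 2) → Fin (n + 3) → M)
    (hF : ∀ i j : Fin (n + 2), j ≤ i → F i j.castSucc = F j i.succ) :
    ∑ i : Fin (n + 2), (-1 : ℤ) ^ (i : ℕ) • ∑ j : Fin (n + 3), (-1 : ℤ) ^ (j : ℕ) • F i j = 0 := by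
  simp only [Finset.smul_sum, smul_smul, ← pow_add, ← Finset.sum_product']
  let S : Finset (Fin (n + 2) × Fin (n + 3)) := {ij | (ij.2 : ℕ) ≤ ij.1}
  rw [Finset.univ_product_univ, ← Finset.sum_add_sum_compl S, add_eq_zero_iff_eq_neg,
    ← Finset.sum_neg_distrib]
  -- `(i, j)` with `j ≤ i` cancels against `(j, i + 1)`
  refine Finset.sum_bij' (fun ij _ => (⟨ij.2, by grind⟩, ij.1.succ))
    (fun ij _ => (⟨ij.2 - 1, by grind⟩, ij.1.castSucc)) ?_ ?_ ?_ ?_ ?_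
  iterate 2
    · intro ij hij
      simp [S] at hij ⊢
      omega
  · intro ij hij
    ext <;> simp
  · intro ij hij
    simp [S] at hij
    ext <;> simp
    omega
  · rintro ⟨i, j⟩ hij
    simp only [S, Finset.mem_filter_univ] at hij
    obtain ⟨j, rfl⟩ : ∃ j' : Fin (n + 2), j'.castSucc = j := ⟨⟨j, by omega⟩, rfl⟩
    simp only [val_castSucc, val_succ, Fin.eta]
    rw [hF i j (le_def.2 hij), ← add_assoc, add_comm (j : ℕ), pow_succ]
    simp

end Fin

section

variable {X : Type*} [MeasurableSpace X] (μ : Measure X)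

lemma measurePreserving_insertNth [SigmaFinite μ] {n : ℕ} (i : Fin (n + 1)) :
    MeasurePreserving (fun p : X × (Fin n → X) => i.insertNth p.1 p.2)
      (μ.prod (Measure.pi fun _ => μ)) (Measure.pi fun _ => μ) :=
  (measurePreserving_piFinSuccAbove (fun _ => μ) i).symm

lemma measurePreserving_insertNth_insertNth [SigmaFinite μ] {n : ℕ} (i : Fin (n + 1))
    (j : Fin (n + 2)) :
    MeasurePreserving (fun p : (X × X) × (Fin n → X) => j.insertNth p.1.1 (i.insertNth p.1.2 p.2))
      ((μ.prod μ).prod (Measure.pi fun _ => μ)) (Measure.pi fun _ => μ) :=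
  (measurePreserving_insertNth μ j).comp <|
    ((MeasurePreserving.id μ).prod (measurePreserving_insertNth μ i)).comp
      (measurePreserving_prodAssoc μ μ _)

lemma measurePreserving_tail [IsProbabilityMeasure μ] {n : ℕ} :
    MeasurePreserving (Fin.tail : (Fin (n + 1) → X) → Fin n → X)
      (Measure.pi fun _ => μ) (Measure.pi fun _ => μ) :=
  measurePreserving_snd.comp (measurePreserving_piFinSuccAbove (fun _ => μ) 0)

lemma boundary0_zero_apply (h : (Fin 1 → X) → ℝ) (x : Fin 0 → X) :
    boundary0 μ 0 h x = ∫ y, h y ∂(Measure.pi fun _ => μ) := by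
  have hx : ∀ t, (0 : Fin 1).insertNth t x = (MeasurableEquiv.funUnique (Fin 1) X).symm t :=
    fun t => funext fun k => by fin_cases k; rfl
  rw [boundary0, Fin.sum_univ_one]
  simp only [Fin.val_zero, pow_zero, one_mul, hx]
  exact (measurePreserving_funUnique μ (Fin 1)).symm.integral_comp' h

lemma boundary0_comp_tail_apply [IsProbabilityMeasure μ] {n : ℕ} (h : (Fin (n + 1) → X) → ℝ)
    (x : Fin (n + 1) → X) :
    boundary0 μ (n + 1) (h ∘ Fin.tail) x = h x - boundary0 μ n h (Fin.tail x) := by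
  rw [boundary0, Fin.sum_univ_succ, sub_eq_add_neg, boundary0, ← Finset.sum_neg_distrib]
  congr 1
  · simp [Fin.insertNth_zero']
  · refine Finset.sum_congr rfl fun j _ => ?_
    simp only [Function.comp_def, Fin.tail_insertNth_succ, Fin.val_succ, pow_succ]
    ring

lemma exists_memLp_boundary0_ae_eq [IsProbabilityMeasure μ] {n : ℕ} {p : ENNReal}
    {h : (Fin (n + 1) → X) → ℝ} (hh : MemLp h p (Measure.pi fun _ => μ))
    (hker : boundary0 μ n h =ᵐ[Measure.pi fun _ => μ] 0) :
    ∃ g : (Fin (n + 2) → X) → ℝ,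
      MemLp g p (Measure.pi fun _ => μ) ∧ boundary0 μ (n + 1) g =ᵐ[Measure.pi fun _ => μ] h := by
  refine ⟨h ∘ Fin.tail, hh.comp_measurePreserving (measurePreserving_tail μ), ?_⟩
  filter_upwards [(measurePreserving_tail μ).quasiMeasurePreserving.ae_eq_comp hker] with x hx
  rw [boundary0_comp_tail_apply, ← Function.comp_apply (f := boundary0 μ n h), hx]
  exact sub_zero (h x)

lemma integral_boundary0 [SigmaFinite μ] {n : ℕ} {g : (Fin (n + 1) → X) → ℝ}
    (hg : Integrable g (Measure.pi fun _ => μ)) :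
    ∫ x, boundary0 μ n g x ∂(Measure.pi fun _ => μ)
      = (∑ i : Fin (n + 1), (-1 : ℝ) ^ (i : ℕ)) * ∫ y, g y ∂(Measure.pi fun _ => μ) := by
  have hgi (i : Fin (n + 1)) : Integrable (fun p : X × (Fin n → X) => g (i.insertNth p.1 p.2))
      (μ.prod (Measure.pi fun _ => μ)) :=
    (measurePreserving_insertNth μ i).integrable_comp_of_integrable hg
  unfold boundary0
  rw [integral_finsetSum _ fun i _ => (hgi i).integral_prod_right.const_mul _,
    Finset.sum_mul]
  refine Finset.sum_congr rfl fun i _ => ?_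
  rw [integral_const_mul, ← integral_prod_symm _ (hgi i),
    (measurePreserving_insertNth μ i).integral_comp
      (MeasurableEquiv.piFinSuccAbove (fun _ => X) i).symm.measurableEmbedding]

lemma ae_integrable_insertNth_insertNth [SigmaFinite μ] {n : ℕ} {g : (Fin (n + 2) → X) → ℝ}
    (hg : Integrable g (Measure.pi fun _ => μ)) :
    ∀ᵐ x ∂(Measure.pi fun _ => μ), ∀ (i : Fin (n + 1)) (j : Fin (n + 2)),
      Integrable (fun q : X × X => g (j.insertNth q.2 (i.insertNth q.1 x))) (μ.prod μ) :=
  ae_all_iff.2 fun i => ae_all_iff.2 fun j =>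
    ((measurePreserving_insertNth_insertNth μ i j).integrable_comp_of_integrable
      hg).prod_left_ae.mono fun _ hx => hx.swap

lemma boundary0_boundary0_apply [SigmaFinite μ] {n : ℕ} {g : (Fin (n + 2) → X) → ℝ}
    {x : Fin n → X} (hx : ∀ (i : Fin (n + 1)) (j : Fin (n + 2)),
      Integrable (fun q : X × X => g (j.insertNth q.2 (i.insertNth q.1 x))) (μ.prod μ)) :
    boundary0 μ n (boundary0 μ (n + 1) g) x = ∑ i : Fin (n + 1), (-1 : ℤ) ^ (i : ℕ) •
      ∑ j : Fin (n + 2), (-1 : ℤ) ^ (j : ℕ) •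
        ∫ q, g (j.insertNth q.2 (i.insertNth q.1 x)) ∂(μ.prod μ) := by
  unfold boundary0
  refine Finset.sum_congr rfl fun i _ => ?_
  rw [integral_finsetSum _ fun j _ => (hx i j).integral_prod_left.const_mul _]
  simp only [integral_const_mul, ← integral_prod _ (hx _ _), zsmul_eq_mul, Int.cast_pow,
    Int.cast_neg, Int.cast_one, Finset.mul_sum]

lemma boundary0_boundary0_ae_eq_zero [SigmaFinite μ] {n : ℕ} {g : (Fin (n + 3) → X) → ℝ}
    (hg : Integrable g (Measure.pi fun _ => μ)) :
    boundary0 μ (n + 1) (boundary0 μ (n + 2) g) =ᵐ[Measure.pi fun _ => μ] 0 := by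
  filter_upwards [ae_integrable_insertNth_insertNth μ hg] with x hx
  rw [boundary0_boundary0_apply μ hx]
  refine Fin.sum_neg_one_pow_smul_sum_eq_zero _ fun i j hji => ?_
  simp only [Fin.insertNth_castSucc_insertNth_of_le hji]
  exact (integral_prod_swap _).symm

end

/-- for the constant kernel `K ≡ 1` the boundary operator
satisfies `Im ∂_ℓ⁰ = Ker ∂_{ℓ-1}⁰` for `ℓ > 1`, and
`Im ∂₁⁰ = {1}^⊥`, the orthogonal complement of the constants in `L²(X)`. -/
theorem boundary0_image_eq_kernel
    {X : Type*} [MeasurableSpace X] (μ : Measure X) [IsProbabilityMeasure μ] :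
    -- For `ℓ = m + 2 > 1`: `Ker ∂_{ℓ-1}⁰ ⊆ Im ∂_ℓ⁰` …
    (∀ (m : ℕ) (h : (Fin (m + 2) → X) → ℝ),
      MemLp h 2 (Measure.pi fun _ : Fin (m + 2) => μ) →
      boundary0 μ (m + 1) h =ᵐ[Measure.pi fun _ : Fin (m + 1) => μ] 0 →
      ∃ g : (Fin (m + 3) → X) → ℝ,
        MemLp g 2 (Measure.pi fun _ : Fin (m + 3) => μ) ∧
        boundary0 μ (m + 2) g =ᵐ[Measure.pi fun _ : Fin (m + 2) => μ] h) ∧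
    -- … and `Im ∂_ℓ⁰ ⊆ Ker ∂_{ℓ-1}⁰`
    (∀ (m : ℕ) (g : (Fin (m + 3) → X) → ℝ),
      MemLp g 2 (Measure.pi fun _ : Fin (m + 3) => μ) →
      boundary0 μ (m + 1) (boundary0 μ (m + 2) g)
        =ᵐ[Measure.pi fun _ : Fin (m + 1) => μ] 0) ∧
    -- `Im ∂₁⁰ ⊆ {1}^⊥` …
    (∀ g : (Fin 2 → X) → ℝ,
      MemLp g 2 (Measure.pi fun _ : Fin 2 => μ) →
      ∫ x, boundary0 μ 1 g x ∂(Measure.pi fun _ : Fin 1 => μ) = 0) ∧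
    -- … and `{1}^⊥ ⊆ Im ∂₁⁰`
    (∀ h : (Fin 1 → X) → ℝ,
      MemLp h 2 (Measure.pi fun _ : Fin 1 => μ) →
      ∫ x, h x ∂(Measure.pi fun _ : Fin 1 => μ) = 0 →
      ∃ g : (Fin 2 → X) → ℝ,
        MemLp g 2 (Measure.pi fun _ : Fin 2 => μ) ∧
        boundary0 μ 1 g =ᵐ[Measure.pi fun _ : Fin 1 => μ] h) := by
  refine ⟨fun m h hh hker => exists_memLp_boundary0_ae_eq μ hh hker,
    fun m g hg => boundary0_boundary0_ae_eq_zero μ (hg.integrable one_le_two),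
    fun g hg => ?_, fun h hh hint => exists_memLp_boundary0_ae_eq μ hh ?_⟩
  · simp [integral_boundary0 μ (hg.integrable one_le_two)]
  · exact .of_forall fun x => (boundary0_zero_apply μ h x).trans hint
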